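/- arXiv:2102.07510 — 2 statements merged into one kernel-verified Lean document; each statement's English description precedes it below -/
import Mathlib

section
/- Suppose u_{k+1} minimizes u ↦ (1/2)‖Au − v‖² + (ρ_t/2)‖L₁u − t_{k+1}‖² + (ρ_z/2)‖L₂u − z_{k+1}‖², where t_{k+1} = D_ext(L₁ u_k) and z_{k+1} = D_int(L₂ u_k) satisfy ‖t_{k+1} − L₁u_k‖² ≤ α C₁/ρ_t and ‖z_{k+1} − L₂u_k‖² ≤ β C₂/ρ_z. Then (1/2)‖Au_{k+1} − v‖² + (ρ_t/2)‖t_{k+1} − L₁u_{k+1}‖² + (ρ_z/2)‖z_{k+1} − L₂u_{k+1}‖² ≤ (1/2)‖Au_k − v‖² + (α C₁ + β C₂)/2. -/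
open Matrix

/-- One-step energy estimate: if `u_{k+1}` minimizes the penalized objective and the
denoiser outputs satisfy the bounded-denoiser estimates
`‖t_{k+1} − L₁u_k‖² ≤ αC₁/ρ_t` and `‖z_{k+1} − L₂u_k‖² ≤ βC₂/ρ_z`, then
`½‖Au_{k+1} − v‖² + (ρ_t/2)‖t_{k+1} − L₁u_{k+1}‖² + (ρ_z/2)‖z_{k+1} − L₂u_{k+1}‖²
  ≤ ½‖Au_k − v‖² + (αC₁ + βC₂)/2`. -/
theorem stmt_6 {n l₁ l₂ : ℕ}
    (A : Matrix (Fin n) (Fin n) ℝ)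
    (L₁ : Matrix (Fin l₁) (Fin n) ℝ) (L₂ : Matrix (Fin l₂) (Fin n) ℝ)
    (v : EuclideanSpace ℝ (Fin n))
    (ρt ρz α β C₁ C₂ : ℝ) (hρt : 0 < ρt) (hρz : 0 < ρz)
    (hα : 0 < α) (hβ : 0 < β) (hC₁ : 0 ≤ C₁) (hC₂ : 0 ≤ C₂)
    (uk uk1 : EuclideanSpace ℝ (Fin n))
    (tk1 : EuclideanSpace ℝ (Fin l₁)) (zk1 : EuclideanSpace ℝ (Fin l₂))
    (hmin : ∀ u : EuclideanSpace ℝ (Fin n),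
      (1 / 2) * ‖toEuclideanLin A uk1 - v‖ ^ 2
          + (ρt / 2) * ‖toEuclideanLin L₁ uk1 - tk1‖ ^ 2
          + (ρz / 2) * ‖toEuclideanLin L₂ uk1 - zk1‖ ^ 2 ≤
        (1 / 2) * ‖toEuclideanLin A u - v‖ ^ 2
          + (ρt / 2) * ‖toEuclideanLin L₁ u - tk1‖ ^ 2
          + (ρz / 2) * ‖toEuclideanLin L₂ u - zk1‖ ^ 2)
    (ht : ‖tk1 - toEuclideanLin L₁ uk‖ ^ 2 ≤ α * C₁ / ρt)
    (hz : ‖zk1 - toEuclideanLin L₂ uk‖ ^ 2 ≤ β * C₂ / ρz) :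
    (1 / 2) * ‖toEuclideanLin A uk1 - v‖ ^ 2
        + (ρt / 2) * ‖tk1 - toEuclideanLin L₁ uk1‖ ^ 2
        + (ρz / 2) * ‖zk1 - toEuclideanLin L₂ uk1‖ ^ 2 ≤
      (1 / 2) * ‖toEuclideanLin A uk - v‖ ^ 2 + (α * C₁ + β * C₂) / 2 := by
  have h := hmin uk
  rw [norm_sub_rev tk1, norm_sub_rev zk1]
  have h1 : (ρt / 2) * ‖toEuclideanLin L₁ uk - tk1‖ ^ 2 ≤ α * C₁ / 2 := by
    rw [norm_sub_rev]
    calc (ρt / 2) * ‖tk1 - toEuclideanLin L₁ uk‖ ^ 2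
        ≤ (ρt / 2) * (α * C₁ / ρt) := by
          exact mul_le_mul_of_nonneg_left ht (by positivity)
      _ = α * C₁ / 2 := by field_simp
  have h2 : (ρz / 2) * ‖toEuclideanLin L₂ uk - zk1‖ ^ 2 ≤ β * C₂ / 2 := by
    rw [norm_sub_rev]
    calc (ρz / 2) * ‖zk1 - toEuclideanLin L₂ uk‖ ^ 2
        ≤ (ρz / 2) * (β * C₂ / ρz) := by
          exact mul_le_mul_of_nonneg_left hz (by positivity)
      _ = β * C₂ / 2 := by field_simp
  linarith
end

section
/- Full fixed-point convergence theorem: Let (ρ_t^k), (ρ_z^k) be nondecreasing positive sequences with ∑√(k/ρ_t^k) < ∞, ∑√(k/ρ_z^k) < ∞, and ρ_z^k/ρ_t^k → c > 0. Let D^ext, D^int be bounded denoisers with σ_k = √(α/ρ_t^k), γ_k = √(β/ρ_z^k), let L₁, L₂ have full column rank, and define iterates t_{k+1} = D^ext_{σ_k}(L₁u_k), z_{k+1} = D^int_{γ_k}(L₂u_k), u_{k+1} = argmin_u { (1/2)‖Au−v‖² + (ρ_t^k/2)‖L₁u − t_{k+1}‖² + (ρ_z^k/2)‖L₂u − z_{k+1}‖²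 }. Then there exist t*, z*, u* such that t_k → t*, z_k → z*, u_k → u*, L₁u_k → t*, and L₂u_k → z*. -/
open Matrix Filter Topology

/-! Testing the minimality of `u (k + 1)` against the competitor `u k`, and using that a denoiser
called with parameter `√(a / ρ)` moves its input by at most `a C / ρ` in squared norm, the data
misfit `‖A u_k - v‖²` grows at most linearly in `k`. Hence both the residuals
`‖L u_{k+1} - t_{k+1}‖` and the denoising steps `‖t_{k+1} - L u_k‖` are `O(√(k / ρ_k))`, which is
summable. So `L₁ u_k` is a Cauchy sequence, `t_k` shadows it, and `u_k` converges because `L₁` is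
injective on a finite-dimensional space. -/

theorem mul_norm_denoiser_sub_sq_le {E : Type*} [SeminormedAddCommGroup E] {D : ℝ → E → E}
    {C : ℝ} (hD : ∀ ε : ℝ, 0 < ε → ∀ x, ‖D ε x - x‖ ^ 2 ≤ ε ^ 2 * C) {a ρ : ℝ} (ha : 0 < a)
    (hρ : 0 < ρ) (x : E) : ρ * ‖D √(a / ρ) x - x‖ ^ 2 ≤ a * C := by
  have hdiv : 0 < a / ρ := div_pos ha hρ
  have h := hD _ (Real.sqrt_pos.2 hdiv) x
  rw [Real.sq_sqrt hdiv.le] at h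
  calc ρ * ‖D √(a / ρ) x - x‖ ^ 2 ≤ ρ * (a / ρ * C) := by gcongr
    _ = a * C := by field_simp

theorem le_mul_succ_of_add_le_add_const {G p : ℕ → ℝ} {M : ℝ} (hG : ∀ k, 0 ≤ G k)
    (hp : ∀ k, 0 ≤ p k) (h : ∀ k, G (k + 1) + p k ≤ G k + M) (k : ℕ) :
    p k ≤ (G 0 + M) * (k + 1) := by
  have hGk : ∀ k : ℕ, G k ≤ G 0 + k * M := by
    intro k
    induction k with
    | zero => simp
    | succ k ih => push_cast; linarith [h k, hp k]
  nlinarith [h k, hGk k, hG (k + 1), hG 0, (k.cast_nonneg : (0 : ℝ) ≤ k)]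

theorem summable_sqrt_succ_div {ρ : ℕ → ℝ} (hρ : ∀ k, 0 < ρ k)
    (h : Summable fun k : ℕ => √(k / ρ k)) : Summable fun k : ℕ => √((k + 1) / ρ k) := by
  refine (summable_nat_add_iff 1).1 <| Summable.of_nonneg_of_le (fun _ => Real.sqrt_nonneg _)
    (fun k => ?_) (((summable_nat_add_iff 1).2 h).mul_left √2)
  rw [← Real.sqrt_mul zero_le_two]
  gcongr
  rw [mul_div_assoc']
  gcongr
  · exact (hρ _).le
  · push_cast; linarith

theorem summable_of_mul_sq_le {ρ x : ℕ → ℝ} {C : ℝ} (hρ : ∀ k, 0 < ρ k)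
    (hs : Summable fun k : ℕ => √(k / ρ k)) (hx : ∀ k, 0 ≤ x k)
    (h : ∀ k, ρ k * x k ^ 2 ≤ C * (k + 1)) : Summable x := by
  refine Summable.of_nonneg_of_le hx (fun k => ?_) ((summable_sqrt_succ_div hρ hs).mul_left √C)
  rw [← Real.sqrt_mul' _ (div_nonneg (by positivity) (hρ k).le)]
  refine (le_abs_self _).trans (Real.abs_le_sqrt ?_)
  rw [mul_div_assoc', le_div_iff₀ (hρ k), mul_comm]
  exact h k

theorem summable_norm_denoiser_sub {E : Type*} [SeminormedAddCommGroup E] {D : ℝ → E → E}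
    {C : ℝ} (hD : ∀ ε : ℝ, 0 < ε → ∀ x, ‖D ε x - x‖ ^ 2 ≤ ε ^ 2 * C) {a : ℝ} (ha : 0 < a)
    {ρ : ℕ → ℝ} (hρ : ∀ k, 0 < ρ k) (hs : Summable fun k : ℕ => √(k / ρ k)) (y : ℕ → E) :
    Summable fun k => ‖D √(a / ρ k) (y k) - y k‖ := by
  have hC : 0 ≤ C := by simpa using (sq_nonneg _).trans (hD 1 one_pos 0)
  refine summable_of_mul_sq_le (C := a * C) hρ hs (fun _ => norm_nonneg _) fun k => ?_
  calc ρ k * ‖D √(a / ρ k) (y k) - y k‖ ^ 2 ≤ a * C :=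
        mul_norm_denoiser_sub_sq_le hD ha (hρ k) _
    _ ≤ a * C * (k + 1) :=
      le_mul_of_one_le_right (by positivity) (by linarith [(k.cast_nonneg : (0 : ℝ) ≤ k)])

theorem exists_tendsto_of_summable_norm_sub {F : Type*} [NormedAddCommGroup F] [CompleteSpace F]
    {t y : ℕ → F} (hty : Summable fun k => ‖t (k + 1) - y k‖)
    (hyt : Summable fun k => ‖y (k + 1) - t (k + 1)‖) :
    ∃ s, Tendsto t atTop (𝓝 s) ∧ Tendsto y atTop (𝓝 s) := by
  have hy : CauchySeq y := by
    refine cauchySeq_of_dist_le_of_summable _ (fun k => ?_) (hyt.add hty)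
    rw [dist_comm, dist_eq_norm]
    calc ‖y (k + 1) - y k‖ = ‖(y (k + 1) - t (k + 1)) + (t (k + 1) - y k)‖ := by abel_nf
      _ ≤ _ := norm_add_le _ _
  obtain ⟨s, hys⟩ := cauchySeq_tendsto_of_complete hy
  have hts : Tendsto (fun k => (t (k + 1) - y k) + y k) atTop (𝓝 (0 + s)) :=
    (tendsto_zero_iff_norm_tendsto_zero.2 hty.tendsto_atTop_zero).add hys
  simp only [sub_add_cancel, zero_add] at hts
  exact ⟨s, (tendsto_add_atTop_iff_nat 1).1 hts, hys⟩

theorem ker_toEuclideanLin_eq_bot_of_posDef {l n : ℕ} {L : Matrix (Fin l) (Fin n) ℝ}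
    (hL : (Lᵀ * L).PosDef) : LinearMap.ker (toEuclideanLin L) = ⊥ := by
  refine LinearMap.ker_eq_bot.2 fun x y hxy => ?_
  have hLxy : L *ᵥ x.ofLp = L *ᵥ y.ofLp := by simpa using congrArg WithLp.ofLp hxy
  have hLLxy : (Lᵀ * L) *ᵥ x.ofLp = (Lᵀ * L) *ᵥ y.ofLp := by
    simp only [← mulVec_mulVec, hLxy]
  exact WithLp.ofLp_injective 2 (mulVec_injective_iff_isUnit.2 hL.isUnit hLLxy)

theorem exists_tendsto_of_tendsto_apply {E F : Type*} [NormedAddCommGroup E] [NormedSpace ℝ E]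
    [FiniteDimensional ℝ E] [NormedAddCommGroup F] [NormedSpace ℝ F] {f : E →ₗ[ℝ] F}
    (hf : LinearMap.ker f = ⊥) {u : ℕ → E} {y : F} (h : Tendsto (fun k => f (u k)) atTop (𝓝 y)) :
    ∃ x, Tendsto u atTop (𝓝 x) := by
  have hfe := LinearMap.isClosedEmbedding_of_injective hf
  obtain ⟨x, rfl⟩ : y ∈ Set.range f :=
    hfe.isClosed_range.mem_of_tendsto h (Eventually.of_forall fun k => ⟨u k, rfl⟩)
  exact ⟨x, hfe.tendsto_nhds_iff.2 h⟩

theorem stmt_16_general {n l₁ l₂ : ℕ}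
    (A : Matrix (Fin n) (Fin n) ℝ)
    (L₁ : Matrix (Fin l₁) (Fin n) ℝ) (L₂ : Matrix (Fin l₂) (Fin n) ℝ)
    (hL₁ : (L₁ᵀ * L₁).PosDef)
    (v : EuclideanSpace ℝ (Fin n))
    (ρt ρz : ℕ → ℝ) (hρtpos : ∀ k, 0 < ρt k) (hρzpos : ∀ k, 0 < ρz k)
    (hsum_t : Summable (fun k : ℕ => Real.sqrt ((k : ℝ) / ρt k)))
    (hsum_z : Summable (fun k : ℕ => Real.sqrt ((k : ℝ) / ρz k)))
    (α β : ℝ) (hα : 0 < α) (hβ : 0 < β)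
    (Dext : ℝ → EuclideanSpace ℝ (Fin l₁) → EuclideanSpace ℝ (Fin l₁))
    (Dint : ℝ → EuclideanSpace ℝ (Fin l₂) → EuclideanSpace ℝ (Fin l₂))
    (Cext Cint : ℝ)
    (hDext : ∀ ε : ℝ, 0 < ε → ∀ x, ‖Dext ε x - x‖ ^ 2 ≤ ε ^ 2 * Cext)
    (hDint : ∀ ε : ℝ, 0 < ε → ∀ x, ‖Dint ε x - x‖ ^ 2 ≤ ε ^ 2 * Cint)
    (u : ℕ → EuclideanSpace ℝ (Fin n))
    (t : ℕ → EuclideanSpace ℝ (Fin l₁)) (z : ℕ → EuclideanSpace ℝ (Fin l₂))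
    (ht : ∀ k, t (k + 1) = Dext (Real.sqrt (α / ρt k)) (toEuclideanLin L₁ (u k)))
    (hz : ∀ k, z (k + 1) = Dint (Real.sqrt (β / ρz k)) (toEuclideanLin L₂ (u k)))
    (hu : ∀ k, ∀ w : EuclideanSpace ℝ (Fin n),
      (1 / 2) * ‖toEuclideanLin A (u (k + 1)) - v‖ ^ 2
          + (ρt k / 2) * ‖toEuclideanLin L₁ (u (k + 1)) - t (k + 1)‖ ^ 2
          + (ρz k / 2) * ‖toEuclideanLin L₂ (u (k + 1)) - z (k + 1)‖ ^ 2 ≤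
        (1 / 2) * ‖toEuclideanLin A w - v‖ ^ 2
          + (ρt k / 2) * ‖toEuclideanLin L₁ w - t (k + 1)‖ ^ 2
          + (ρz k / 2) * ‖toEuclideanLin L₂ w - z (k + 1)‖ ^ 2) :
    ∃ (tstar : EuclideanSpace ℝ (Fin l₁)) (zstar : EuclideanSpace ℝ (Fin l₂))
      (ustar : EuclideanSpace ℝ (Fin n)),
      Tendsto t atTop (𝓝 tstar) ∧ Tendsto z atTop (𝓝 zstar) ∧
        Tendsto u atTop (𝓝 ustar) ∧
        Tendsto (fun k => toEuclideanLin L₁ (u k)) atTop (𝓝 tstar) ∧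
        Tendsto (fun k => toEuclideanLin L₂ (u k)) atTop (𝓝 zstar) := by
  set e₁ := fun k => ρt k * ‖toEuclideanLin L₁ (u (k + 1)) - t (k + 1)‖ ^ 2
  set e₂ := fun k => ρz k * ‖toEuclideanLin L₂ (u (k + 1)) - z (k + 1)‖ ^ 2
  have he₁ : ∀ k, 0 ≤ e₁ k := fun k => mul_nonneg (hρtpos k).le (sq_nonneg _)
  have he₂ : ∀ k, 0 ≤ e₂ k := fun k => mul_nonneg (hρzpos k).le (sq_nonneg _)
  have hdescent : ∀ k, ‖toEuclideanLin A (u (k + 1)) - v‖ ^ 2 + (e₁ k + e₂ k) ≤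
      ‖toEuclideanLin A (u k) - v‖ ^ 2 + (α * Cext + β * Cint) := fun k => by
    have hmin := hu k (u k)
    have hdt : ρt k * ‖t (k + 1) - toEuclideanLin L₁ (u k)‖ ^ 2 ≤ α * Cext := by
      rw [ht k]; exact mul_norm_denoiser_sub_sq_le hDext hα (hρtpos k) _
    have hdz : ρz k * ‖z (k + 1) - toEuclideanLin L₂ (u k)‖ ^ 2 ≤ β * Cint := by
      rw [hz k]; exact mul_norm_denoiser_sub_sq_le hDint hβ (hρzpos k) _
    rw [norm_sub_rev (toEuclideanLin L₁ (u k)), norm_sub_rev (toEuclideanLin L₂ (u k))] at hmin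
    linarith
  have hres := le_mul_succ_of_add_le_add_const
    (G := fun k => ‖toEuclideanLin A (u k) - v‖ ^ 2) (fun _ => sq_nonneg _)
    (fun k => add_nonneg (he₁ k) (he₂ k)) hdescent
  have hdt_sum : Summable fun k => ‖t (k + 1) - toEuclideanLin L₁ (u k)‖ := by
    simpa only [ht] using summable_norm_denoiser_sub hDext hα hρtpos hsum_t _
  have hdz_sum : Summable fun k => ‖z (k + 1) - toEuclideanLin L₂ (u k)‖ := by
    simpa only [hz] using summable_norm_denoiser_sub hDint hβ hρzpos hsum_z _
  obtain ⟨tstar, htstar, hL₁star⟩ := exists_tendsto_of_summable_norm_sub hdt_sum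
    (summable_of_mul_sq_le hρtpos hsum_t (fun _ => norm_nonneg _)
      fun k => (le_add_of_nonneg_right (he₂ k)).trans (hres k))
  obtain ⟨zstar, hzstar, hL₂star⟩ := exists_tendsto_of_summable_norm_sub hdz_sum
    (summable_of_mul_sq_le hρzpos hsum_z (fun _ => norm_nonneg _)
      fun k => (le_add_of_nonneg_left (he₁ k)).trans (hres k))
  obtain ⟨ustar, hustar⟩ :=
    exists_tendsto_of_tendsto_apply (ker_toEuclideanLin_eq_bot_of_posDef hL₁) hL₁star
  exact ⟨tstar, zstar, ustar, htstar, hzstar, hustar, hL₁star, hL₂star⟩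

/-- Fixed-point convergence theorem for the hybrid Plug-and-Play HQS algorithm:
under bounded denoisers, full-column-rank operators `L₁, L₂` and suitable penalty
sequences, the iterates `t_k, z_k, u_k` converge, and moreover `L₁u_k → t*`,
`L₂u_k → z*`. -/
theorem stmt_16 {n l₁ l₂ : ℕ}
    (A : Matrix (Fin n) (Fin n) ℝ)
    (L₁ : Matrix (Fin l₁) (Fin n) ℝ) (L₂ : Matrix (Fin l₂) (Fin n) ℝ)
    (hL₁ : (L₁ᵀ * L₁).PosDef) (hL₂ : (L₂ᵀ * L₂).PosDef)
    (v : EuclideanSpace ℝ (Fin n))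
    (ρt ρz : ℕ → ℝ) (hρtpos : ∀ k, 0 < ρt k) (hρzpos : ∀ k, 0 < ρz k)
    (hρtmono : Monotone ρt) (hρzmono : Monotone ρz)
    (hsum_t : Summable (fun k : ℕ => Real.sqrt ((k : ℝ) / ρt k)))
    (hsum_z : Summable (fun k : ℕ => Real.sqrt ((k : ℝ) / ρz k)))
    (c : ℝ) (hc : 0 < c)
    (hratio : Tendsto (fun k => ρz k / ρt k) atTop (𝓝 c))
    (α β : ℝ) (hα : 0 < α) (hβ : 0 < β)
    (Dext : ℝ → EuclideanSpace ℝ (Fin l₁) → EuclideanSpace ℝ (Fin l₁))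
    (Dint : ℝ → EuclideanSpace ℝ (Fin l₂) → EuclideanSpace ℝ (Fin l₂))
    (Cext Cint : ℝ) (hCext : 0 ≤ Cext) (hCint : 0 ≤ Cint)
    (hDext : ∀ ε : ℝ, 0 < ε → ∀ x, ‖Dext ε x - x‖ ^ 2 ≤ ε ^ 2 * Cext)
    (hDint : ∀ ε : ℝ, 0 < ε → ∀ x, ‖Dint ε x - x‖ ^ 2 ≤ ε ^ 2 * Cint)
    (u : ℕ → EuclideanSpace ℝ (Fin n))
    (t : ℕ → EuclideanSpace ℝ (Fin l₁)) (z : ℕ → EuclideanSpace ℝ (Fin l₂))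
    (ht : ∀ k, t (k + 1) = Dext (Real.sqrt (α / ρt k)) (toEuclideanLin L₁ (u k)))
    (hz : ∀ k, z (k + 1) = Dint (Real.sqrt (β / ρz k)) (toEuclideanLin L₂ (u k)))
    (hu : ∀ k, ∀ w : EuclideanSpace ℝ (Fin n),
      (1 / 2) * ‖toEuclideanLin A (u (k + 1)) - v‖ ^ 2
          + (ρt k / 2) * ‖toEuclideanLin L₁ (u (k + 1)) - t (k + 1)‖ ^ 2
          + (ρz k / 2) * ‖toEuclideanLin L₂ (u (k + 1)) - z (k + 1)‖ ^ 2 ≤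
        (1 / 2) * ‖toEuclideanLin A w - v‖ ^ 2
          + (ρt k / 2) * ‖toEuclideanLin L₁ w - t (k + 1)‖ ^ 2
          + (ρz k / 2) * ‖toEuclideanLin L₂ w - z (k + 1)‖ ^ 2) :
    ∃ (tstar : EuclideanSpace ℝ (Fin l₁)) (zstar : EuclideanSpace ℝ (Fin l₂))
      (ustar : EuclideanSpace ℝ (Fin n)),
      Tendsto t atTop (𝓝 tstar) ∧ Tendsto z atTop (𝓝 zstar) ∧
        Tendsto u atTop (𝓝 ustar) ∧
        Tendsto (fun k => toEuclideanLin L₁ (u k)) atTop (𝓝 tstar) ∧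
        Tendsto (fun k => toEuclideanLin L₂ (u k)) atTop (𝓝 zstar) :=
  stmt_16_general A L₁ L₂ hL₁ v ρt ρz hρtpos hρzpos hsum_t hsum_z α β hα hβ Dext Dint Cext Cint
    hDext hDint u t z ht hz hu
end
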